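/- The centerless Kupershmidt product e_p ⋆ e_q = -(q(1+εq)/(1+ε(p+q))) e_{p+q} on the span of basis elements e_p (p ∈ ℤ) satisfies the left-symmetry (quasi-associativity) identity: e_p ⋆ (e_q ⋆ e_r) - (e_p ⋆ e_q) ⋆ e_r = e_q ⋆ (e_p ⋆ e_r) - (e_q ⋆ e_p) ⋆ e_r for all p, q, r ∈ ℤ. Equivalently, the scalar function f(p,q) = -q(1+εq)/(1+ε(p+q)) satisfies (f(p,q) - f(q,p))·f(p+q,r) = f(q,r)·f(p,q+r) - f(p,r)·f(q,p+r) for all integers p,q,r (assuming the denominators 1+ε(p+q), 1+ε(q+r), 1+ε(p+r), 1+ε(p+q+r) are nonzero). -/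
import Mathlib

/-- The centerless Kupershmidt structure function
`f(p,q) = -q(1+εq)/(1+ε(p+q))` satisfies the left-symmetry
(quasi-associativity) functional identity. -/
theorem kupershmidt_left_symmetric (ε : ℝ) (f : ℤ → ℤ → ℝ)
    (hf : ∀ p q : ℤ, f p q = -((q : ℝ) * (1 + ε * q)) / (1 + ε * ((p : ℝ) + q)))
    (p q r : ℤ)
    (h1 : 1 + ε * ((p : ℝ) + q) ≠ 0)
    (h2 : 1 + ε * ((q : ℝ) + r) ≠ 0)
    (h3 : 1 + ε * ((p : ℝ) + r) ≠ 0)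
    (h4 : 1 + ε * ((p : ℝ) + q + r) ≠ 0) :
    (f p q - f q p) * f (p + q) r
      = f q r * f p (q + r) - f p r * f q (p + r) := by
  simp only [hf]
  push_cast
  have h1' : 1 + ε * ((q : ℝ) + p) ≠ 0 := by rw [add_comm (q:ℝ)]; exact h1
  have h4'' : 1 + ε * ((p : ℝ) + (q + r)) ≠ 0 := by rw [← add_assoc]; exact h4
  have h4''' : 1 + ε * ((q : ℝ) + (p + r)) ≠ 0 := by
    rw [show (q:ℝ) + (p + r) = p + q + r by ring]; exact h4
  field_simp
  ring
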